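/- Splitting inequality for RM constants: Let n ≥ 3, X₁,…,X_{n+1} Banach spaces, ϖ an (n+1)-linear contraction, J ⊂ {1,…,n+1} with 1 ≤ #J ≤ n−2, v ∉ J, and write J = J₀ ∪ J₁ with J₀ ∩ J₁ = ∅ and J₁ ≠ ∅. For any K ∈ ℕ and elements e_{j,k} ∈ X_j (j ∈ J, k = 1,…,K): if J₀ ≠ ∅ then ‖{(e_{j,k})_{j∈J}}_{k=1}^K‖_{RM_v(ϖ,J)} ≤ ‖{(e_{j,k})_{j∈J₀}}_{k=1}^K‖_{RM_v(ϖ,J₀)} · ∏_{j∈J₁} ‖(e_{j,k})_{k=1}^K‖_{Rad(X_j)}; and if J₀ = ∅ then ‖{(e_{j,k})_{j∈J}}_{k=1}^K‖_{RM_v(ϖ,J)} ≤ ∏_{j∈J₁} ‖(e_{j,k})_{k=1}^K‖_{Rad(X_j)}. Here ‖{(e_{j,k})_{j∈J}}_{k=1}^K‖_{RM_v(ϖ,J)} denotes the RM constant of the finite indexed family, i.e. the supremum of |∑_{k=1}^K ϖ(e_{1,k},…,e_v,…,e_{n+1,k})| over all choices of e_{j,k} ∈ X_j for j ∉ J∪{v}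 with ‖(e_{j,k})_k‖_{Rad(X_j)} ≤ 1 and e_v ∈ X_v with ‖e_v‖ ≤ 1. -/

import Mathlib

open MeasureTheory
open scoped ENNReal NNReal BigOperators Classical

noncomputable section

namespace OVM

/-! ### Points and cubes in `ℝ^d` -/

abbrev Pt (d : ℕ) := Fin d → ℝ

structure Cube (d : ℕ) where
  x : Fin d → ℝ
  s : ℝ
  pos : 0 < s

namespace Cube

variable {d : ℕ}

def set (Q : Cube d) : Set (Pt d) := {p | ∀ i, Q.x i ≤ p i ∧ p i < Q.x i + Q.s}

def vol (Q : Cube d) : ℝ := Q.s ^ d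

def center (Q : Cube d) : Pt d := fun i => Q.x i + Q.s / 2

/-- The concentric dilate `CQ` with `C = 2√d + 1 ≥ 2√d`. -/
def dil (Q : Cube d) : Cube d :=
  ⟨fun i => Q.x i + Q.s / 2 - (2 * Real.sqrt d + 1) * Q.s / 2,
   (2 * Real.sqrt d + 1) * Q.s, by
     have h1 : (0:ℝ) < 2 * Real.sqrt d + 1 := by positivity
     exact mul_pos h1 Q.pos⟩

end Cube

/-! ### Dyadic grids: `D_ω = {2^{-k}([0,1)^d + m) + ∑_{2^{-j} < 2^{-k}} ω_j 2^{-j}}` -/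

def dyadicShiftVec {d : ℕ} (ω : ℤ → Fin d → Bool) (k : ℤ) : Pt d :=
  fun i => ∑' j : ℤ, if k < j ∧ ω j i = true then (2:ℝ) ^ (-j) else 0

def dyadicCube {d : ℕ} (ω : ℤ → Fin d → Bool) (k : ℤ) (m : Fin d → ℤ) : Cube d :=
  ⟨fun i => (m i : ℝ) * (2:ℝ) ^ (-k) + dyadicShiftVec ω k i, (2:ℝ) ^ (-k), by positivity⟩

def dyadicGrid {d : ℕ} (ω : ℤ → Fin d → Bool) : Set (Cube d) :=
  {Q | ∃ k m, Q = dyadicCube ω k m}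

def IsDyadicGrid {d : ℕ} (D : Set (Cube d)) : Prop := ∃ ω, D = dyadicGrid ω

def stdGrid (d : ℕ) : Set (Cube d) := dyadicGrid fun _ _ => false

/-- `IsAncestor K Q k` means `Q^{(k)} = K`, i.e. `K` is the `k`-th dyadic ancestor of `Q`. -/
def IsAncestor {d : ℕ} (K Q : Cube d) (k : ℕ) : Prop :=
  Q.set ⊆ K.set ∧ K.s = 2 ^ k * Q.s

/-- `Q'` is a dyadic child of `Q`. -/
def IsChild {d : ℕ} (Q' Q : Cube d) : Prop := IsAncestor Q Q' 1

/-! ### Haar functions -/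

def haar1 (a s : ℝ) (b : Bool) : ℝ → ℝ := fun t =>
  if b then
    (if a ≤ t ∧ t < a + s / 2 then (Real.sqrt s)⁻¹
     else if a + s / 2 ≤ t ∧ t < a + s then -(Real.sqrt s)⁻¹ else 0)
  else if a ≤ t ∧ t < a + s then (Real.sqrt s)⁻¹ else 0

/-- The Haar function `h_Q^η` on the cube `Q`. -/
def haar {d : ℕ} (Q : Cube d) (η : Fin d → Bool) : Pt d → ℝ :=
  fun p => ∏ i, haar1 (Q.x i) Q.s (η i) (p i)

/-- A Haar parameter is cancellative iff it is not identically zero. -/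
def cancel {d : ℕ} (η : Fin d → Bool) : Prop := ∃ i, η i = true

/-! ### basic function classes, averages, sparse collections -/

/-- bounded, compactly supported, strongly measurable (the class `L^∞_c`). -/
def BCS {d : ℕ} {X : Type*} [NormedAddCommGroup X] (f : Pt d → X) : Prop :=
  StronglyMeasurable f ∧ (∃ M, ∀ x, ‖f x‖ ≤ M) ∧ HasCompactSupport f

/-- the average `⟨f⟩_Q`. -/
def cubeAvg {d : ℕ} {X : Type*} [NormedAddCommGroup X] [NormedSpace ℝ X]
    (Q : Cube d) (f : Pt d → X) : X :=
  Q.vol⁻¹ • ∫ y in Q.set, f y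

/-- the average `⟨‖f‖_X⟩_Q`, as an extended real. -/
def avgNormE {d : ℕ} {X : Type*} [NormedAddCommGroup X] (Q : Cube d) (f : Pt d → X) : ℝ≥0∞ :=
  (∫⁻ y in Q.set, ENNReal.ofReal ‖f y‖) / ENNReal.ofReal Q.vol

/-- `S` is an `η`-sparse collection of cubes of `D`. -/
def IsSparseIn {d : ℕ} (η : ℝ) (S D : Set (Cube d)) : Prop :=
  S ⊆ D ∧ ∃ E : Cube d → Set (Pt d),
    (∀ Q ∈ S, E Q ⊆ Q.set ∧ ENNReal.ofReal (η * Q.vol) < volume (E Q)) ∧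
    S.PairwiseDisjoint E

/-- `L^p`-norm of an `ℝ≥0∞`-valued function (`0 < p < ∞`). -/
def lpNormE {d : ℕ} (F : Pt d → ℝ≥0∞) (p : ℝ) : ℝ≥0∞ := (∫⁻ x, F x ^ p) ^ p⁻¹

/-- distance between two sets. -/
def setDist {α : Type*} [PseudoEMetricSpace α] (A B : Set α) : ℝ :=
  (⨅ (x ∈ A) (y ∈ B), edist x y).toReal

/-! ### randomized norms -/

/-- `‖(e_k)‖_{Rad(X)} = (E‖∑ ε_k e_k‖²)^{1/2}`. -/
def radNorm {X : Type*} [NormedAddCommGroup X] {K : ℕ} (e : Fin K → X) : ℝ :=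
  Real.sqrt ((∑ ε : Fin K → Bool, ‖∑ k, if ε k then e k else -e k‖ ^ 2) / 2 ^ K)

/-- `‖(e_{l,m})‖_{Rad₂(X)}`, doubly indexed random sums. -/
def rad2Norm {X : Type*} [NormedAddCommGroup X] {N M : ℕ} (e : Fin N → Fin M → X) : ℝ :=
  Real.sqrt ((∑ ε : Fin N → Fin M → Bool, ‖∑ l, ∑ m, if ε l m then e l m else -e l m‖ ^ 2) /
    2 ^ (N * M))

/-- `(E E'‖∑ ε_i ε'_j e_{i,j}‖²)^{1/2}`, two independent families of signs. -/
def radRad {X : Type*} [NormedAddCommGroup X] {N : ℕ} (e : Fin N → Fin N → X) : ℝ :=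
  Real.sqrt ((∑ ε : Fin N → Bool, ∑ δ : Fin N → Bool,
      ‖∑ i, ∑ j, if ε i = δ j then e i j else -e i j‖ ^ 2) / 4 ^ N)

/-- Pisier's property `(α)`. -/
def HasPisierAlpha (X : Type*) [NormedAddCommGroup X] [NormedSpace ℝ X] : Prop :=
  ∃ C : ℝ, ∀ (N : ℕ) (a : Fin N → Fin N → ℝ) (e : Fin N → Fin N → X),
    (∀ i j, |a i j| ≤ 1) → radRad (fun i j => a i j • e i j) ≤ C * radRad e

/-! ### multilinear contractions and RM constants -/

section RM

variable {n : ℕ} {Z : Fin (n + 1) → Type*} [∀ j, NormedAddCommGroup (Z j)]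

/-- `ϖ` is an `(n+1)`-linear contraction. -/
def IsContraction [∀ j, NormedSpace ℂ (Z j)] (ϖ : (∀ j, Z j) → ℂ) : Prop :=
  (∃ Λ : MultilinearMap ℂ Z ℂ, ⇑Λ = ϖ) ∧ ∀ e, ‖ϖ e‖ ≤ ∏ j, ‖e j‖

/-- The `RM_v(ϖ, J)` constant of a finite indexed family `{(e_{j,k})_{j∈J}}_{k=1}^K`:
the supremum of `|∑_k ϖ(e_{1,k},…,e_{n+1,k})|` over all completions of the family with a
fixed unit vector in the slot `v` and Rademacher-normalized sequences elsewhere. -/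
def RMfam (ϖ : (∀ j, Z j) → ℂ) (J : Finset (Fin (n + 1))) (v : Fin (n + 1))
    {K : ℕ} (e : ∀ j ∈ J, Fin K → Z j) : ℝ≥0∞ :=
  ⨆ (g : ∀ j, Fin K → Z j) (_ :
      (∀ j (hj : j ∈ J), g j = e j hj) ∧
      (∃ gv : Z v, (∀ k, g v k = gv) ∧ ‖gv‖ ≤ 1) ∧
      ∀ j, j ∉ J → j ≠ v → radNorm (g j) ≤ 1),
    ENNReal.ofReal ‖∑ k, ϖ fun j => g j k‖

/-- The `RM_v(ϖ, J)` constant of a set `A` of `J`-tuples. -/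
def RMconst (ϖ : (∀ j, Z j) → ℂ) (J : Finset (Fin (n + 1))) (v : Fin (n + 1))
    (A : Set (∀ j ∈ J, Z j)) : ℝ≥0∞ :=
  ⨆ (K : ℕ) (e : ∀ j ∈ J, Fin K → Z j)
    (_ : ∀ k : Fin K, (fun j hj => e j hj k) ∈ A), RMfam ϖ J v e

/-- The `RM'_v(ϖ, J)` constant: as `RMconst`, but with pairwise distinct tuples. -/
def RMconstDistinct (ϖ : (∀ j, Z j) → ℂ) (J : Finset (Fin (n + 1))) (v : Fin (n + 1))
    (A : Set (∀ j ∈ J, Z j)) : ℝ≥0∞ :=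
  ⨆ (K : ℕ) (e : ∀ j ∈ J, Fin K → Z j)
    (_ : (∀ k : Fin K, (fun j hj => e j hj k) ∈ A) ∧
         Function.Injective fun k : Fin K => (fun j hj => e j hj k : ∀ j ∈ J, Z j)),
    RMfam ϖ J v e

/-- The `RM_v(ϖ, J)` constant of a family indexed by `ℕ` (sup of its finite truncations). -/
def RMfamInf (ϖ : (∀ j, Z j) → ℂ) (J : Finset (Fin (n + 1))) (v : Fin (n + 1))
    (e : ∀ j ∈ J, ℕ → Z j) : ℝ≥0∞ :=
  ⨆ K : ℕ, RMfam ϖ J v fun j hj => fun k : Fin K => e j hj k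

/-- The factor appearing in the `R_ϖ`-boundedness condition; for `J = ∅` (the case `n = 2`)
no RM factor appears. -/
def RMfactor (ϖ : (∀ j, Z j) → ℂ) (J : Finset (Fin (n + 1))) (v : Fin (n + 1))
    {K : ℕ} (e : ∀ j ∈ J, Fin K → Z j) : ℝ≥0∞ :=
  if J = ∅ then 1 else RMfam ϖ J v e

/-! ### the Rademacher maximal function and the RMF property -/

variable [∀ j, NormedSpace ℂ (Z j)]

/-- The multilinear Rademacher maximal function `RM_{D,ϖ,J,v}[(f_j)_{j∈J}]`. -/
def RMmax {d : ℕ} (ϖ : (∀ j, Z j) → ℂ) (D : Set (Cube d)) (J : Finset (Fin (n + 1)))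
    (v : Fin (n + 1)) (f : ∀ j ∈ J, Pt d → Z j) (x : Pt d) : ℝ≥0∞ :=
  RMconst ϖ J v {a | ∃ Q ∈ D, x ∈ Q.set ∧ a = fun j hj => cubeAvg Q (f j hj)}

/-- The `RMF_ϖ` property of the tuple `(Z_1, …, Z_{n+1})` relative to the lattice `D`
and the exponents `p`. -/
def HasRMF {d : ℕ} (ϖ : (∀ j, Z j) → ℂ) (D : Set (Cube d)) (p : Fin (n + 1) → ℝ≥0∞) : Prop :=
  ∀ j₁ j₂ : Fin (n + 1), j₁ ≠ j₂ → ∃ v : Fin (n + 1), v ≠ j₁ ∧ v ≠ j₂ ∧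
    ∀ J : Finset (Fin (n + 1)), J.Nonempty → (∀ j ∈ J, j ≠ j₁ ∧ j ≠ j₂ ∧ j ≠ v) →
      ∃ C : ℝ≥0∞, C ≠ ⊤ ∧ ∀ f : ∀ j ∈ J, Pt d → Z j,
        lpNormE (RMmax ϖ D J v f) ((∑ j ∈ J, (p j)⁻¹)⁻¹).toReal ≤
          C * ∏ j ∈ J.attach, eLpNorm (f j.1 j.2) (p j.1) volume

end RM

/-!
If `J₀ ≠ ∅`, dividing each `g_j`, `j ∈ J₁`, of a completion `g` of the family by its Rademacher
norm yields a completion of the `J₀`-subfamily, and multilinearity pulls out the factor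
`∏_{j ∈ J₁} ‖(e_{j,k})_k‖_{Rad}` (if one of these norms vanishes, so does `e_j` and the sum).

If `J₀ = ∅`, everything rests on a decoupling inequality: a multilinear form `Λ` in at least two
variables with `|Λ(x)| ≤ C ∏_j ‖x_j‖` satisfies `|∑_k Λ(g_{·,k})| ≤ C ∏_j ‖(g_{j,k})_k‖_{Rad}`.
Put independent Rademacher sequences `ε^{(j)}` in the slots `j ≠ w` and their product
`∏_{j ≠ w} ε^{(j)}_k` in the slot `w`. The expected product of the signs drawn at indices
`(k_j)_j` is the indicator of `k_j` being constant in `j`, so `∑_k Λ(g_{·,k})` is the expectation of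
`Λ` at the randomized vectors; bound it pointwise and apply Cauchy–Schwarz between the slot `w`
and the others, using that a product of independent Rademacher sequences is again one. The unit
vector in the slot `v` is absorbed into `C` by restricting `Λ` to the other `n ≥ 2` slots.
-/

section RademacherSigns

open Finset

def boolSign (b : Bool) : ℂ := if b then 1 else -1

lemma boolSign_mul_self (b : Bool) : boolSign b * boolSign b = 1 := by
  cases b <;> simp [boolSign]

lemma boolSign_not (b : Bool) : boolSign (!b) = -boolSign b := by
  cases b <;> simp [boolSign]

lemma boolSign_beq (a b : Bool) : boolSign (a == b) = boolSign a * boolSign b := by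
  cases a <;> cases b <;> simp [boolSign]

lemma boolSign_smul {E : Type*} [AddCommGroup E] [Module ℂ E] (b : Bool) (x : E) :
    boolSign b • x = if b then x else -x := by
  cases b <;> simp [boolSign]

lemma expect_boolSign_mul_boolSign {α : Type*} [Fintype α] [DecidableEq α] (a b : α) :
    𝔼 u : α → Bool, boolSign (u a) * boolSign (u b) = if a = b then 1 else 0 := by
  split_ifs with hab
  · subst hab
    simp only [boolSign_mul_self, Fintype.expect_const]
  · have hflip : Function.Involutive fun u : α → Bool => Function.update u a (!u a) :=
      fun u => by simp
    have hneg : 𝔼 u : α → Bool, boolSign (u a) * boolSign (u b)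
        = -𝔼 u : α → Bool, boolSign (u a) * boolSign (u b) := by
      rw [← Finset.expect_neg_distrib]
      refine Fintype.expect_bijective _ hflip.bijective _ _ fun u => ?_
      simp only [Function.update_self, Function.update_of_ne (Ne.symm hab), boolSign_not]
      ring
    linear_combination hneg / 2

end RademacherSigns

section RadNorm

open Finset

variable {E : Type*} [NormedAddCommGroup E] {K : ℕ}

lemma radNorm_nonneg (x : Fin K → E) : 0 ≤ radNorm x := Real.sqrt_nonneg _

variable [NormedSpace ℂ E]

lemma radNorm_eq_sqrt_expect (x : Fin K → E) :
    radNorm x = √(𝔼 u : Fin K → Bool, ‖∑ k, boolSign (u k) • x k‖ ^ 2) := by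
  simp [radNorm, Fintype.expect_eq_sum_div_card, boolSign_smul]

lemma radNorm_sq (x : Fin K → E) :
    radNorm x ^ 2 = 𝔼 u : Fin K → Bool, ‖∑ k, boolSign (u k) • x k‖ ^ 2 := by
  rw [radNorm_eq_sqrt_expect, Real.sq_sqrt (expect_nonneg fun _ _ => by positivity)]

lemma radNorm_smul (c : ℂ) (x : Fin K → E) : radNorm (fun k => c • x k) = ‖c‖ * radNorm x := by
  have hsq : radNorm (fun k => c • x k) ^ 2 = (‖c‖ * radNorm x) ^ 2 := by
    rw [radNorm_sq, mul_pow, radNorm_sq, mul_expect]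
    refine expect_congr rfl fun u _ => ?_
    simp only [smul_comm _ c, ← smul_sum, norm_smul, mul_pow]
  exact (pow_left_inj₀ (radNorm_nonneg _) (mul_nonneg (norm_nonneg c) (radNorm_nonneg x))
    two_ne_zero).mp hsq

lemma eq_zero_of_radNorm_eq_zero {x : Fin K → E} (hx : radNorm x = 0) : x = 0 := by
  have hu : ∀ u : Fin K → Bool, ∑ k, boolSign (u k) • x k = 0 := by
    have h : 𝔼 u : Fin K → Bool, ‖∑ k, boolSign (u k) • x k‖ ^ 2 = 0 := by
      rw [← radNorm_sq, hx, sq, zero_mul]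
    intro u
    simpa using congrFun ((Fintype.expect_eq_zero_iff_of_nonneg fun u => by positivity).mp h) u
  funext a
  have hexpand : ∑ u : Fin K → Bool, boolSign (u a) • ∑ k, boolSign (u k) • x k
      = (Fintype.card (Fin K → Bool) : ℂ) • x a := by
    simp only [smul_sum, smul_smul]
    rw [sum_comm]
    simp only [← sum_smul, ← Fintype.card_smul_expect, expect_boolSign_mul_boolSign]
    simp
  simp only [hu, smul_zero, sum_const_zero] at hexpand
  exact (smul_eq_zero.mp hexpand.symm).resolve_left (by simp)

end RadNorm

section IndependentSigns

open Finset

variable {ι : Type*} [Fintype ι] [DecidableEq ι]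

lemma expect_pi_prod_eq_prod_expect {β R : Type*} [Fintype β] [Nonempty β] [Field R]
    [CharZero R] (S : Finset ι) (f : ι → β → R) :
    𝔼 ω : ι → β, ∏ j ∈ S, f j (ω j) = ∏ j ∈ S, 𝔼 b, f j b := by
  have hcard : (Fintype.card β : R) ≠ 0 := by simp
  simp only [Fintype.expect_eq_sum_div_card, Fintype.card_fun, Nat.cast_pow,
    ← Fintype.prod_ite_mem S]
  rw [← Fintype.prod_sum (fun j b => if j ∈ S then f j b else 1), ← Finset.card_univ (α := ι),
    ← prod_const, ← prod_div_distrib]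
  refine prod_congr rfl fun j _ => ?_
  split_ifs
  · rfl
  · simp [hcard]

lemma expect_comp_prod_boolSign {α M : Type*} [Fintype α] [DecidableEq α] [AddCommMonoid M]
    [Module ℚ≥0 M]
    {S : Finset ι} {t₀ : ι} (ht₀ : t₀ ∈ S) (F : (α → ℂ) → M) :
    𝔼 ω : ι → α → Bool, F (fun k => ∏ t ∈ S, boolSign (ω t k))
      = 𝔼 ω : ι → α → Bool, F (fun k => boolSign (ω t₀ k)) := by
  set q : (ι → α → Bool) → α → ℂ := fun ω k => ∏ t ∈ S.erase t₀, boolSign (ω t k)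
  have hq : ∀ ω k, q ω k * q ω k = 1 := fun ω k => by
    simp only [q, ← prod_mul_distrib, boolSign_mul_self, prod_const_one]
  have hq_sign : ∀ ω k, boolSign (decide (q ω k = 1)) = q ω k := fun ω k => by
    rcases mul_self_eq_one_iff.mp (hq ω k) with h | h <;> rw [h] <;> norm_num [boolSign]
  -- multiplying the signs at `t₀` by the remaining ones preserves the uniform distribution
  set Φ : (ι → α → Bool) → ι → α → Bool :=
    fun ω => Function.update ω t₀ fun k => ω t₀ k == decide (q ω k = 1)
  have hqΦ : ∀ ω, q (Φ ω) = q ω := fun ω => funext fun k =>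
    prod_congr rfl fun t ht => by simp only [Φ, Function.update_of_ne (ne_of_mem_erase ht)]
  have hΦ : Function.Involutive Φ := fun ω => by
    ext t k
    by_cases ht : t = t₀
    · subst ht
      simp only [Φ, Function.update_self, hqΦ]
      cases ω t k <;> cases decide (q ω k = 1) <;> rfl
    · simp only [Φ, Function.update_of_ne ht]
  have hprod : ∀ ω k, ∏ t ∈ S, boolSign (Φ ω t k) = boolSign (ω t₀ k) := fun ω k => by
    rw [← mul_prod_erase S _ ht₀]
    change boolSign (Φ ω t₀ k) * q (Φ ω) k = _
    simp only [Φ, Function.update_self]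
    rw [hqΦ, boolSign_beq, hq_sign, mul_assoc, hq, mul_one]
  exact (Fintype.expect_bijective Φ hΦ.bijective _ _ fun ω => by simp only [hprod]).symm

end IndependentSigns

section Decoupling

open Finset

lemma sum_ite_forall_eq_const {ι β M : Type*} [Fintype ι] [DecidableEq ι] [Fintype β]
    [DecidableEq β] [AddCommMonoid M] (w : ι) (f : (ι → β) → M) :
    ∑ κ : ι → β, (if ∀ j, κ w = κ j then f κ else 0) = ∑ b, f fun _ => b := by
  rw [← sum_filter]
  exact sum_nbij' (· w) (fun b _ => b) (by simp) (by simp)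
    (fun κ hκ => funext (mem_filter.mp hκ).2) (by simp)
    fun κ hκ => congrArg f (funext (mem_filter.mp hκ).2).symm

variable {ι : Type*} [Fintype ι] [DecidableEq ι] {Z : ι → Type*}
  [∀ j, NormedAddCommGroup (Z j)] [∀ j, NormedSpace ℂ (Z j)] {K : ℕ}

def decouplingSign (w : ι) (ω : ι → Fin K → Bool) (j : ι) (k : Fin K) : ℂ :=
  if j = w then ∏ t ∈ univ.erase w, boolSign (ω t k) else boolSign (ω j k)

lemma prod_decouplingSign (w : ι) (ω : ι → Fin K → Bool) (κ : ι → Fin K) :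
    ∏ j, decouplingSign w ω j (κ j) = ∏ j, boolSign (ω j (κ w)) * boolSign (ω j (κ j)) := by
  rw [← mul_prod_erase univ _ (mem_univ w), ← mul_prod_erase univ _ (mem_univ w),
    boolSign_mul_self, one_mul, prod_mul_distrib, decouplingSign, if_pos rfl]
  congr 1
  exact prod_congr rfl fun j hj => if_neg (ne_of_mem_erase hj)

lemma expect_prod_decouplingSign (w : ι) (κ : ι → Fin K) :
    𝔼 ω : ι → Fin K → Bool, ∏ j, decouplingSign w ω j (κ j)
      = if ∀ j, κ w = κ j then 1 else 0 := by
  simp only [prod_decouplingSign]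
  exact (expect_pi_prod_eq_prod_expect (β := Fin K → Bool) univ
    fun j u => boolSign (u (κ w)) * boolSign (u (κ j))).trans
    (by simp only [expect_boolSign_mul_boolSign, Fintype.prod_boole])

def decoupledVec (w : ι) (g : ∀ j, Fin K → Z j) (ω : ι → Fin K → Bool) (j : ι) : Z j :=
  ∑ k, decouplingSign w ω j k • g j k

lemma expect_decoupledVec (Λ : MultilinearMap ℂ Z ℂ) (w : ι) (g : ∀ j, Fin K → Z j) :
    𝔼 ω, Λ (decoupledVec w g ω) = ∑ k, Λ fun j => g j k := by
  change 𝔼 ω, Λ (fun j => ∑ k, decouplingSign w ω j k • g j k) = _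
  simp only [Λ.map_sum, Λ.map_smul_univ, smul_eq_mul]
  rw [expect_sum_comm]
  simp only [← expect_mul, expect_prod_decouplingSign, ite_mul, one_mul, zero_mul]
  exact sum_ite_forall_eq_const w fun κ => Λ fun j => g j (κ j)

lemma expect_norm_decoupledVec_sq (g : ∀ j, Fin K → Z j) {w t₀ : ι} (hne : t₀ ≠ w) :
    𝔼 ω, ‖decoupledVec w g ω w‖ ^ 2 = radNorm (g w) ^ 2 := by
  have hvec : ∀ ω, decoupledVec w g ω w = ∑ k, (∏ t ∈ univ.erase w, boolSign (ω t k)) • g w k :=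
    fun ω => sum_congr rfl fun k _ => by rw [decouplingSign, if_pos rfl]
  simp only [hvec]
  rw [expect_comp_prod_boolSign (mem_erase.mpr ⟨hne, mem_univ t₀⟩)
      fun c => ‖∑ k, c k • g w k‖ ^ 2, radNorm_sq]
  simpa using expect_pi_prod_eq_prod_expect {t₀}
    fun _ (u : Fin K → Bool) => ‖∑ k, boolSign (u k) • g w k‖ ^ 2

lemma expect_prod_norm_decoupledVec_sq (w : ι) (g : ∀ j, Fin K → Z j) :
    𝔼 ω, (∏ j ∈ univ.erase w, ‖decoupledVec w g ω j‖) ^ 2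
      = ∏ j ∈ univ.erase w, radNorm (g j) ^ 2 := by
  have hvec : ∀ ω, ∀ j ∈ univ.erase w, decoupledVec w g ω j = ∑ k, boolSign (ω j k) • g j k :=
    fun ω j hj => sum_congr rfl fun k _ => by rw [decouplingSign, if_neg (ne_of_mem_erase hj)]
  simp only [← prod_pow, radNorm_sq]
  rw [← expect_pi_prod_eq_prod_expect (univ.erase w)
    fun j (u : Fin K → Bool) => ‖∑ k, boolSign (u k) • g j k‖ ^ 2]
  exact expect_congr rfl fun ω _ => prod_congr rfl fun j hj => by rw [hvec ω j hj]

theorem norm_sum_multilinearMap_le (Λ : MultilinearMap ℂ Z ℂ) {C : ℝ} (hC : 0 ≤ C)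
    (hΛ : ∀ x, ‖Λ x‖ ≤ C * ∏ j, ‖x j‖) (hι : 1 < Fintype.card ι) (g : ∀ j, Fin K → Z j) :
    ‖∑ k, Λ fun j => g j k‖ ≤ C * ∏ j, radNorm (g j) := by
  obtain ⟨w, t₀, hne⟩ := Fintype.exists_pair_of_one_lt_card hι
  set T := decoupledVec w g
  have hCS : 𝔼 ω, ‖T ω w‖ * ∏ j ∈ univ.erase w, ‖T ω j‖
      ≤ radNorm (g w) * ∏ j ∈ univ.erase w, radNorm (g j) := by
    have h := expect_mul_sq_le_sq_mul_sq univ (fun ω => ‖T ω w‖)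
      fun ω => ∏ j ∈ univ.erase w, ‖T ω j‖
    rw [expect_norm_decoupledVec_sq g (Ne.symm hne), expect_prod_norm_decoupledVec_sq,
      prod_pow, ← mul_pow] at h
    exact (pow_le_pow_iff_left₀ (expect_nonneg fun _ _ => by positivity)
      (mul_nonneg (radNorm_nonneg _) (prod_nonneg fun _ _ => radNorm_nonneg _))
      two_ne_zero).mp h
  calc ‖∑ k, Λ fun j => g j k‖ = ‖𝔼 ω, Λ (T ω)‖ := by rw [expect_decoupledVec]
    _ ≤ 𝔼 ω, ‖Λ (T ω)‖ := RCLike.norm_expect_le (K := ℂ)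
    _ ≤ 𝔼 ω, C * (‖T ω w‖ * ∏ j ∈ univ.erase w, ‖T ω j‖) :=
        expect_le_expect fun ω _ => by
          rw [mul_prod_erase univ (fun j => ‖T ω j‖) (mem_univ w)]; exact hΛ _
    _ = C * 𝔼 ω, ‖T ω w‖ * ∏ j ∈ univ.erase w, ‖T ω j‖ := (mul_expect _ _ _).symm
    _ ≤ C * (radNorm (g w) * ∏ j ∈ univ.erase w, radNorm (g j)) := by gcongr
    _ = C * ∏ j, radNorm (g j) := by
        rw [mul_prod_erase univ (fun j => radNorm (g j)) (mem_univ w)]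

theorem norm_sum_multilinearMap_le_of_const (Λ : MultilinearMap ℂ Z ℂ)
    (hΛ : ∀ x, ‖Λ x‖ ≤ ∏ j, ‖x j‖) (hι : 2 < Fintype.card ι) {v : ι} (g : ∀ j, Fin K → Z j)
    (x : Z v) (hgv : ∀ k, g v k = x) :
    ‖∑ k, Λ fun j => g j k‖ ≤ ‖x‖ * ∏ j ∈ univ.erase v, radNorm (g j) := by
  let Λ' := Λ.domDomRestrict (· ≠ v) fun i => ((not_not.mp i.2).symm ▸ x : Z i.1)
  have hΛ' : ∀ k, (Λ' fun i => g i.1 k) = Λ fun j => g j k := fun k => by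
    simp only [Λ', MultilinearMap.domDomRestrict_apply]
    congr 1
    funext j
    split_ifs with hj
    · rfl
    · obtain rfl := not_not.mp hj
      exact (hgv k).symm
  have hbound : ∀ y, ‖Λ' y‖ ≤ ‖x‖ * ∏ i, ‖y i‖ := fun y => by
    refine (hΛ _).trans_eq ?_
    rw [Fintype.prod_eq_mul_prod_subtype_ne _ v, dif_neg (not_not.mpr rfl)]
    congr 1
    exact prod_congr rfl fun i _ => by rw [dif_pos i.2]
  have hcard : 1 < Fintype.card {j // j ≠ v} := by
    rw [Fintype.card_subtype_compl, Fintype.card_subtype_eq]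
    omega
  simp only [← hΛ']
  refine (norm_sum_multilinearMap_le Λ' (norm_nonneg x) hbound hcard fun i => g i.1).trans_eq ?_
  rw [prod_subtype (p := (· ≠ v)) (univ.erase v) fun j => by simp]

end Decoupling

section RMSplitting

open Finset

variable {n : ℕ} {Z : Fin (n + 1) → Type*} [∀ j, NormedAddCommGroup (Z j)]
  {J : Finset (Fin (n + 1))} {v : Fin (n + 1)} {K : ℕ} {e : ∀ j ∈ J, Fin K → Z j}
  {g : ∀ j, Fin K → Z j}

def IsRMCompletion (J : Finset (Fin (n + 1))) (v : Fin (n + 1)) (e : ∀ j ∈ J, Fin K → Z j)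
    (g : ∀ j, Fin K → Z j) : Prop :=
  (∀ j (hj : j ∈ J), g j = e j hj) ∧ (∃ gv : Z v, (∀ k, g v k = gv) ∧ ‖gv‖ ≤ 1) ∧
    ∀ j, j ∉ J → j ≠ v → radNorm (g j) ≤ 1

lemma ofReal_norm_sum_le_RMfam (ϖ : (∀ j, Z j) → ℂ) (hg : IsRMCompletion J v e g) :
    ENNReal.ofReal ‖∑ k, ϖ fun j => g j k‖ ≤ RMfam ϖ J v e :=
  le_iSup₂_of_le (f := fun g (_ : IsRMCompletion J v e g) => _) g hg le_rfl

lemma RMfam_le {ϖ : (∀ j, Z j) → ℂ} {c : ℝ≥0∞}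
    (h : ∀ g, IsRMCompletion J v e g → ENNReal.ofReal ‖∑ k, ϖ fun j => g j k‖ ≤ c) :
    RMfam ϖ J v e ≤ c :=
  iSup₂_le h

lemma IsRMCompletion.prod_ofReal_radNorm (hg : IsRMCompletion J v e g) {S : Finset (Fin (n + 1))}
    (hS : S ⊆ J) :
    ∏ j ∈ S.attach, ENNReal.ofReal (radNorm (e j.1 (hS j.2)))
      = ENNReal.ofReal (∏ j ∈ S, radNorm (g j)) := by
  rw [ENNReal.ofReal_prod_of_nonneg fun j _ => radNorm_nonneg _, ← prod_attach S]
  exact prod_congr rfl fun j _ => by rw [hg.1 j.1 (hS j.2)]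

variable [∀ j, NormedSpace ℂ (Z j)]

lemma IsRMCompletion.rescale {J₀ J₁ : Finset (Fin (n + 1))} (hg : IsRMCompletion J v e g)
    (h₀ : J₀ ⊆ J) (hcover : J ⊆ J₀ ∪ J₁) (hdisj : Disjoint J₀ J₁) (hv : v ∉ J₁)
    (hpos : ∀ j ∈ J₁, radNorm (g j) ≠ 0) :
    IsRMCompletion J₀ v (fun j hj => e j (h₀ hj))
      fun j k => ((if j ∈ J₁ then radNorm (g j) else 1 : ℝ) : ℂ)⁻¹ • g j k := by
  obtain ⟨hge, ⟨gv, hgv, hgv_le⟩, hgrad⟩ := hg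
  have hfix : ∀ j ∉ J₁,
      (fun k => ((if j ∈ J₁ then radNorm (g j) else 1 : ℝ) : ℂ)⁻¹ • g j k) = g j := fun j hj => by
    simp [hj]
  refine ⟨fun j hj => ?_, ⟨gv, fun k => ?_, hgv_le⟩, fun j hj₀ hjv => ?_⟩
  · dsimp only
    rw [hfix j (disjoint_left.mp hdisj hj), hge]
  · rw [← hgv k, ← hfix v hv]
  · by_cases hj₁ : j ∈ J₁
    · rw [radNorm_smul, if_pos hj₁, norm_inv, Complex.norm_real, Real.norm_of_nonneg
        (radNorm_nonneg _), inv_mul_cancel₀ (hpos j hj₁)]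
    · dsimp only
      rw [hfix j hj₁]
      exact hgrad j (fun hj => (mem_union.mp (hcover hj)).elim hj₀ hj₁) hjv

theorem RMfam_le_RMfam_mul_prod_radNorm (Λ : MultilinearMap ℂ Z ℂ) {J₀ J₁ : Finset (Fin (n + 1))}
    (h₀ : J₀ ⊆ J) (h₁ : J₁ ⊆ J) (hcover : J ⊆ J₀ ∪ J₁) (hdisj : Disjoint J₀ J₁) (hv : v ∉ J₁)
    (e : ∀ j ∈ J, Fin K → Z j) :
    RMfam Λ J v e ≤ RMfam Λ J₀ v (fun j hj => e j (h₀ hj)) *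
      ∏ j ∈ J₁.attach, ENNReal.ofReal (radNorm (e j.1 (h₁ j.2))) := by
  refine RMfam_le fun g hg => ?_
  rw [hg.prod_ofReal_radNorm h₁]
  by_cases hzero : ∃ j ∈ J₁, radNorm (g j) = 0
  · obtain ⟨j₀, -, h⟩ := hzero
    have hterm : ∀ k, Λ (fun j => g j k) = 0 := fun k =>
      Λ.map_coord_zero j₀ (congrFun (eq_zero_of_radNorm_eq_zero h) k)
    simp [hterm]
  push Not at hzero
  set r : Fin (n + 1) → ℝ := fun j => if j ∈ J₁ then radNorm (g j) else 1
  have hr : ∀ j, (r j : ℂ) ≠ 0 := fun j => by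
    by_cases hj : j ∈ J₁ <;> simp [r, hj, hzero]
  have hprod : ∏ j, r j = ∏ j ∈ J₁, radNorm (g j) := Fintype.prod_ite_mem J₁ _
  have hsum : ∑ k, Λ (fun j => g j k)
      = (∏ j ∈ J₁, radNorm (g j) : ℝ) * ∑ k, Λ fun j => (r j : ℂ)⁻¹ • g j k := by
    rw [← hprod, Complex.ofReal_prod, mul_sum]
    refine sum_congr rfl fun k _ => ?_
    rw [← smul_eq_mul, ← Λ.map_smul_univ]
    simp only [smul_smul, mul_inv_cancel₀ (hr _), one_smul]
  calc ENNReal.ofReal ‖∑ k, Λ fun j => g j k‖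
      = ENNReal.ofReal (∏ j ∈ J₁, radNorm (g j)) *
          ENNReal.ofReal ‖∑ k, Λ fun j => (r j : ℂ)⁻¹ • g j k‖ := by
        rw [hsum, norm_mul, Complex.norm_real, Real.norm_of_nonneg
          (prod_nonneg fun _ _ => radNorm_nonneg _), ENNReal.ofReal_mul
          (prod_nonneg fun _ _ => radNorm_nonneg _)]
    _ ≤ ENNReal.ofReal (∏ j ∈ J₁, radNorm (g j)) * RMfam Λ J₀ v fun j hj => e j (h₀ hj) := by
        gcongr
        exact ofReal_norm_sum_le_RMfam _ (hg.rescale h₀ hcover hdisj hv hzero)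
    _ = _ := mul_comm _ _

theorem RMfam_le_prod_radNorm (Λ : MultilinearMap ℂ Z ℂ) (hΛ : ∀ x, ‖Λ x‖ ≤ ∏ j, ‖x j‖)
    (hn : 2 ≤ n) (hv : v ∉ J) (e : ∀ j ∈ J, Fin K → Z j) :
    RMfam Λ J v e ≤ ∏ j ∈ J.attach, ENNReal.ofReal (radNorm (e j.1 j.2)) := by
  refine RMfam_le fun g hg => ?_
  rw [hg.prod_ofReal_radNorm subset_rfl]
  obtain ⟨-, ⟨x, hgv, hx⟩, hgrad⟩ := hg
  have hJ : J ⊆ univ.erase v := fun j hj => mem_erase.mpr ⟨fun h => hv (h ▸ hj), mem_univ j⟩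
  have hprod : ∏ j ∈ univ.erase v, radNorm (g j) ≤ ∏ j ∈ J, radNorm (g j) := by
    rw [← prod_sdiff hJ]
    refine mul_le_of_le_one_left (prod_nonneg fun _ _ => radNorm_nonneg _)
      (prod_le_one (fun _ _ => radNorm_nonneg _) fun j hj => ?_)
    obtain ⟨hjv, hjJ⟩ := mem_sdiff.mp hj
    exact hgrad j hjJ (ne_of_mem_erase hjv)
  refine ENNReal.ofReal_le_ofReal ((norm_sum_multilinearMap_le_of_const Λ hΛ
    (by simp only [Fintype.card_fin]; omega) g x hgv).trans ?_)
  simpa using mul_le_mul hx hprod (prod_nonneg fun _ _ => radNorm_nonneg _) zero_le_one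

end RMSplitting

/-- splitting inequality for RM constants. -/
theorem RMfam_splitting {n : ℕ} (hn : 3 ≤ n)
    (Z : Fin (n + 1) → Type u) [∀ j, NormedAddCommGroup (Z j)] [∀ j, NormedSpace ℂ (Z j)]
    (ϖ : (∀ j, Z j) → ℂ) (hϖ : IsContraction ϖ)
    (J J₀ J₁ : Finset (Fin (n + 1)))
    (hJ : J = J₀ ∪ J₁) (hdisj : Disjoint J₀ J₁)
    (v : Fin (n + 1)) (hv : v ∉ J)
    (K : ℕ) (e : ∀ j ∈ J, Fin K → Z j) :
    (J₀.Nonempty →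
      RMfam ϖ J v e ≤
        RMfam ϖ J₀ v (fun j hj => e j (by rw [hJ]; exact Finset.mem_union_left _ hj)) *
          ∏ j ∈ J₁.attach,
            ENNReal.ofReal (radNorm (e j.1
              (by rw [hJ]; exact Finset.mem_union_right _ j.2)))) ∧
    (J₀ = ∅ →
      RMfam ϖ J v e ≤
        ∏ j ∈ J₁.attach,
          ENNReal.ofReal (radNorm (e j.1
            (by rw [hJ]; exact Finset.mem_union_right _ j.2)))) := by
  obtain ⟨⟨Λ, rfl⟩, hΛ⟩ := hϖ
  have h₁ : J₁ ⊆ J := hJ ▸ Finset.subset_union_right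
  refine ⟨fun _ => RMfam_le_RMfam_mul_prod_radNorm Λ (hJ ▸ Finset.subset_union_left) h₁
    hJ.subset hdisj (fun h => hv (h₁ h)) e, fun hJ₀ => ?_⟩
  subst hJ₀
  obtain rfl : J = J₁ := by simpa using hJ
  exact RMfam_le_prod_radNorm Λ hΛ (by omega) hv e

end OVM
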